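/- For every n ∈ ℕ, nonnegative real k, and x ∈ [0,1], the third central moment satisfies P_{n,k}^{⟨k/n⟩}((e₁ − x)³; x) = (k+1)(2k+1)x(1−x)(1−2x)/((n+k)(n+2k)). -/

import Mathlib

open Finset Filter

/-- Pochhammer k-symbol: `(λ)_{m,k} = λ(λ+k)⋯(λ+(m-1)k)`. -/
noncomputable def pochK (lam k : ℝ) (m : ℕ) : ℝ :=
  ∏ i ∈ Finset.range m, (lam + i * k)

/-- Lupaş-type operator based on Polya distribution with Pochhammer k-symbol. -/
noncomputable def LupasP (n : ℕ) (k : ℝ) (f : ℝ → ℝ) (x : ℝ) : ℝ :=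
  (1 / pochK n k n) * ∑ m ∈ Finset.range (n + 1),
    (n.choose m : ℝ) * pochK (n * x) k m * pochK (n - n * x) k (n - m) * f (m / n)

/-- Kantorovich-Stancu modification of the Lupaş-type operator. -/
noncomputable def KantK (n : ℕ) (α β k : ℝ) (f : ℝ → ℝ) (x : ℝ) : ℝ :=
  ((n + β + 1) / pochK n k n) * ∑ m ∈ Finset.range (n + 1),
    (n.choose m : ℝ) * pochK (n * x) k m * pochK (n - n * x) k (n - m) *
      ∫ t in ((m + α) / (n + β + 1))..((m + α + 1) / (n + β + 1)), f t

/-- Modulus of continuity of `f` on `[0,1]`. -/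
noncomputable def modulus (f : ℝ → ℝ) (δ : ℝ) : ℝ :=
  sSup {y | ∃ x t : ℝ, x ∈ Set.Icc (0:ℝ) 1 ∧ t ∈ Set.Icc (0:ℝ) 1 ∧
    |t - x| ≤ δ ∧ y = |f t - f x|}

lemma pochK_succ (a k : ℝ) (m : ℕ) : pochK a k (m+1) = pochK a k m * (a + m*k) :=
  Finset.prod_range_succ _ _

lemma pochK_add (a k : ℝ) (p q : ℕ) :
    pochK a k (p+q) = pochK a k p * pochK (a + p*k) k q := by
  unfold pochK
  rw [Finset.prod_range_add]
  congr 1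
  refine Finset.prod_congr rfl fun i _ => ?_
  push_cast
  ring

lemma pochK_pos {lam k : ℝ} (hl : 0 < lam) (hk : 0 ≤ k) (m : ℕ) : 0 < pochK lam k m := by
  refine Finset.prod_pos fun i _ => ?_
  have : (0:ℝ) ≤ (i:ℝ) * k := by positivity
  linarith

lemma vandK (k : ℝ) (n : ℕ) (a b : ℝ) :
    ∑ m ∈ Finset.range (n+1), (n.choose m : ℝ) * pochK a k m * pochK b k (n-m)
      = pochK (a+b) k n := by
  induction n with
  | zero => simp [pochK]
  | succ n ih =>
    set g : ℕ → ℝ := fun m => (n.choose m : ℝ) * pochK a k m * pochK b k (n-m) with hg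
    have step1 : ∑ m ∈ Finset.range (n+2),
        ((n+1).choose m : ℝ) * pochK a k m * pochK b k (n+1-m)
        = (∑ i ∈ Finset.range (n+1),
            ((n.choose (i+1) : ℝ) * pochK a k (i+1) * pochK b k (n-i)
              + g i * (a + (i:ℝ) * k)))
          + pochK b k (n+1) := by
      rw [Finset.sum_range_succ']
      congr 1
      · refine Finset.sum_congr rfl fun i _ => ?_
        rw [Nat.choose_succ_succ, Nat.succ_sub_succ, pochK_succ]
        push_cast [hg]
        ring
      · simp [pochK]
    have step3 : ∑ i ∈ Finset.range (n+1),
        (n.choose (i+1) : ℝ) * pochK a k (i+1) * pochK b k (n-i)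
        = ∑ i ∈ Finset.range n,
        (n.choose (i+1) : ℝ) * pochK a k (i+1) * pochK b k (n-i) := by
      rw [Finset.sum_range_succ, Nat.choose_succ_self]
      simp
    have step4 : ∑ m ∈ Finset.range (n+1),
        (n.choose m : ℝ) * pochK a k m * pochK b k (n+1-m)
        = (∑ i ∈ Finset.range n,
            (n.choose (i+1) : ℝ) * pochK a k (i+1) * pochK b k (n-i)) + pochK b k (n+1) := by
      rw [Finset.sum_range_succ']
      congr 1
      · refine Finset.sum_congr rfl fun i _ => ?_
        rw [Nat.succ_sub_succ]
      · simp [pochK]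
    have step5 : ∀ m ∈ Finset.range (n+1),
        g m * (b + ((n:ℝ) - m) * k)
        = (n.choose m : ℝ) * pochK a k m * pochK b k (n+1-m) := by
      intro m hm
      rw [Finset.mem_range] at hm
      have h1 : n + 1 - m = (n - m) + 1 := by omega
      have h2 : ((n - m : ℕ) : ℝ) = (n:ℝ) - m := by
        have hm' : m ≤ n := by omega
        push_cast [hm']; ring
      rw [h1, pochK_succ, hg, ← h2]
      ring
    have hA : (∑ i ∈ Finset.range (n+1),
        (n.choose (i+1) : ℝ) * pochK a k (i+1) * pochK b k (n-i)) + pochK b k (n+1)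
        = ∑ m ∈ Finset.range (n+1), g m * (b + ((n:ℝ) - m) * k) := by
      rw [step3, ← step4]
      exact (Finset.sum_congr rfl step5).symm
    rw [step1, Finset.sum_add_distrib, add_right_comm, hA, ← Finset.sum_add_distrib]
    have hcomb : ∀ m ∈ Finset.range (n+1),
        g m * (b + ((n:ℝ) - m) * k) + g m * (a + (m:ℝ) * k)
        = g m * (a + b + (n:ℝ)*k) := by
      intro m _; ring
    rw [Finset.sum_congr rfl hcomb, ← Finset.sum_mul, ih, ← pochK_succ]

lemma SgenK (k : ℝ) (j n : ℕ) (a b : ℝ) :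
    ∑ m ∈ Finset.range (n+1),
      (n.choose m : ℝ) * (∏ i ∈ Finset.range j, ((m:ℝ) - i)) * pochK a k m * pochK b k (n-m)
    = (∏ i ∈ Finset.range j, ((n:ℝ) - i)) * pochK a k j * pochK (a + b + j*k) k (n-j) := by
  by_cases hjn : j ≤ n
  · have hsplit : Finset.range (n+1) = Finset.range j ∪ Finset.Ico j (n+1) := by
      rw [Finset.range_eq_Ico, Finset.range_eq_Ico]
      rw [Finset.Ico_union_Ico_eq_Ico (Nat.zero_le j) (by omega)]
    rw [hsplit, Finset.sum_union (by
      simp only [Finset.disjoint_left, Finset.mem_range, Finset.mem_Ico]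
      omega)]
    have hzero : ∑ m ∈ Finset.range j,
        (n.choose m : ℝ) * (∏ i ∈ Finset.range j, ((m:ℝ) - i)) * pochK a k m * pochK b k (n-m) = 0 := by
      refine Finset.sum_eq_zero fun m hm => ?_
      rw [Finset.mem_range] at hm
      have : (∏ i ∈ Finset.range j, ((m:ℝ) - i)) = 0 :=
        Finset.prod_eq_zero (Finset.mem_range.2 hm) (by simp)
      rw [this]; ring
    rw [hzero, zero_add]
    rw [Finset.sum_Ico_eq_sum_range]
    have hlen : n + 1 - j = (n - j) + 1 := by omega
    rw [hlen]
    have hterm : ∀ i ∈ Finset.range ((n-j)+1),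
        (n.choose (j+i) : ℝ) * (∏ r ∈ Finset.range j, (((j+i:ℕ):ℝ) - r)) *
          pochK a k (j+i) * pochK b k (n-(j+i))
        = (∏ r ∈ Finset.range j, ((n:ℝ) - r)) * pochK a k j *
          (((n-j).choose i : ℝ) * pochK (a + j*k) k i * pochK b k ((n-j)-i)) := by
      intro i hi
      rw [Finset.mem_range] at hi
      have hji : j + i ≤ n := by omega
      have hc1 : (∏ r ∈ Finset.range j, (((j+i:ℕ):ℝ) - r)) = ((j+i).descFactorial j : ℝ) := by
        rw [Nat.descFactorial_eq_prod_range]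
        push_cast
        refine Finset.prod_congr rfl fun r hr => ?_
        rw [Finset.mem_range] at hr
        rw [Nat.cast_sub (by omega)]
        push_cast; ring
      have hc2 : (∏ r ∈ Finset.range j, ((n:ℝ) - r)) = (n.descFactorial j : ℝ) := by
        rw [Nat.descFactorial_eq_prod_range]
        push_cast
        refine Finset.prod_congr rfl fun r hr => ?_
        rw [Finset.mem_range] at hr
        rw [Nat.cast_sub (by omega)]
      have hnat : n.choose (j+i) * (j+i).descFactorial j
          = n.descFactorial j * (n-j).choose i := by
        rw [Nat.descFactorial_eq_factorial_mul_choose, Nat.descFactorial_eq_factorial_mul_choose]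
        have := Nat.choose_mul (n := n) (k := j+i) (s := j) (Nat.le_add_right j i)
        rw [show j + i - j = i by omega] at this
        calc n.choose (j+i) * (Nat.factorial j * (j+i).choose j)
            = Nat.factorial j * (n.choose (j+i) * (j+i).choose j) := by ring
          _ = Nat.factorial j * (n.choose j * (n-j).choose i) := by rw [this]
          _ = Nat.factorial j * n.choose j * (n-j).choose i := by ring
      have hcast : (n.choose (j+i) : ℝ) * ((j+i).descFactorial j : ℝ)
          = (n.descFactorial j : ℝ) * ((n-j).choose i : ℝ) := by
        exact_mod_cast congrArg (Nat.cast (R := ℝ)) hnat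
      have hp : pochK a k (j+i) = pochK a k j * pochK (a + j*k) k i := pochK_add a k j i
      have hnm : n - (j+i) = (n-j) - i := by omega
      rw [hc1, hc2, hp, hnm]
      linear_combination (pochK a k j * pochK (a + (j:ℝ)*k) k i * pochK b k ((n-j)-i)) * hcast
    rw [Finset.sum_congr rfl hterm]
    rw [← Finset.mul_sum]
    rw [vandK k (n-j) (a + (j:ℝ)*k) b, show a + (j:ℝ)*k + b = a + b + (j:ℝ)*k by ring]
  · push_neg at hjn
    have hL : ∑ m ∈ Finset.range (n+1),
        (n.choose m : ℝ) * (∏ i ∈ Finset.range j, ((m:ℝ) - i)) * pochK a k m * pochK b k (n-m) = 0 := by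
      refine Finset.sum_eq_zero fun m hm => ?_
      rw [Finset.mem_range] at hm
      have : (∏ i ∈ Finset.range j, ((m:ℝ) - i)) = 0 :=
        Finset.prod_eq_zero (i := m) (Finset.mem_range.2 (by omega)) (by simp)
      rw [this]; ring
    have hR : (∏ i ∈ Finset.range j, ((n:ℝ) - i)) = 0 :=
      Finset.prod_eq_zero (i := n) (Finset.mem_range.2 hjn) (by simp)
    rw [hL, hR]; ring

lemma pochK_zero' (a k : ℝ) : pochK a k 0 = 1 := by simp [pochK]

lemma pochK_one (a k : ℝ) : pochK a k 1 = a := by simp [pochK]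

lemma pochK_two (a k : ℝ) : pochK a k 2 = a * (a + k) := by
  simp [pochK, Finset.prod_range_succ]

lemma pochK_three (a k : ℝ) : pochK a k 3 = a * (a + k) * (a + 2*k) := by
  simp [pochK, Finset.prod_range_succ]

theorem lupas_central_moment_three (n : ℕ) (hn : 0 < n) (k : ℝ) (hk : 0 ≤ k)
    (x : ℝ) (hx : x ∈ Set.Icc (0:ℝ) 1) :
    LupasP n k (fun t => (t - x) ^ 3) x =
      (k + 1) * (2 * k + 1) * x * (1 - x) * (1 - 2 * x) / ((n + k) * (n + 2 * k)) := by
  have hnpos : (0:ℝ) < n := by exact_mod_cast hn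
  have hn0 : (n:ℝ) ≠ 0 := ne_of_gt hnpos
  have hnk : (0:ℝ) < (n:ℝ) + k := by linarith
  have hn2k : (0:ℝ) < (n:ℝ) + 2*k := by linarith
  rcases Nat.lt_or_ge n 3 with h3 | h3
  · interval_cases n
    · -- n = 1
      have h1k : (1:ℝ) + k ≠ 0 := by norm_num at hnk ⊢; linarith
      have h12k : (1:ℝ) + 2*k ≠ 0 := by norm_num at hn2k ⊢; linarith
      simp only [LupasP, pochK, Finset.sum_range_succ, Finset.sum_range_zero,
        Finset.prod_range_succ, Finset.prod_range_zero]
      push_cast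
      simp only [Nat.choose_zero_right, Nat.choose_self, Nat.choose_one_right, Nat.cast_one, Nat.cast_ofNat]
      field_simp
      ring
    · -- n = 2
      have h2k : (2:ℝ) + k ≠ 0 := by norm_num at hnk ⊢; linarith
      have h22k : (2:ℝ) + 2*k ≠ 0 := by norm_num at hn2k ⊢; linarith
      simp only [LupasP, pochK, Finset.sum_range_succ, Finset.sum_range_zero,
        Finset.prod_range_succ, Finset.prod_range_zero]
      push_cast
      simp only [Nat.choose_zero_right, Nat.choose_self, Nat.choose_one_right, Nat.cast_one, Nat.cast_ofNat]
      field_simp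
      ring
  · -- n ≥ 3
    have hQ : (0:ℝ) < pochK ((n:ℝ) + 3*k) k (n-3) :=
      pochK_pos (by linarith) hk _
    have hterm : ∀ m ∈ Finset.range (n+1),
        (n.choose m : ℝ) * pochK ((n:ℝ)*x) k m * pochK ((n:ℝ) - (n:ℝ)*x) k (n-m)
            * (((m:ℝ)/(n:ℝ) - x)^3)
        = (1/(n:ℝ)^3) * ((n.choose m : ℝ) * (∏ i ∈ Finset.range 3, ((m:ℝ) - i))
              * pochK ((n:ℝ)*x) k m * pochK ((n:ℝ)-(n:ℝ)*x) k (n-m))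
          + (3/(n:ℝ)^3 - 3*x/(n:ℝ)^2) * ((n.choose m : ℝ) * (∏ i ∈ Finset.range 2, ((m:ℝ) - i))
              * pochK ((n:ℝ)*x) k m * pochK ((n:ℝ)-(n:ℝ)*x) k (n-m))
          + (1/(n:ℝ)^3 - 3*x/(n:ℝ)^2 + 3*x^2/(n:ℝ)) * ((n.choose m : ℝ) * (∏ i ∈ Finset.range 1, ((m:ℝ) - i))
              * pochK ((n:ℝ)*x) k m * pochK ((n:ℝ)-(n:ℝ)*x) k (n-m))
          + (-x^3) * ((n.choose m : ℝ) * (∏ i ∈ Finset.range 0, ((m:ℝ) - i))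
              * pochK ((n:ℝ)*x) k m * pochK ((n:ℝ)-(n:ℝ)*x) k (n-m)) := by
      intro m _
      simp only [Finset.prod_range_succ, Finset.prod_range_zero, Finset.prod_range_one]
      push_cast
      field_simp
      ring
    simp only [LupasP]
    rw [Finset.sum_congr rfl hterm]
    rw [Finset.sum_add_distrib, Finset.sum_add_distrib, Finset.sum_add_distrib,
      ← Finset.mul_sum, ← Finset.mul_sum, ← Finset.mul_sum, ← Finset.mul_sum]
    rw [SgenK k 3 n ((n:ℝ)*x) ((n:ℝ) - (n:ℝ)*x), SgenK k 2 n ((n:ℝ)*x) ((n:ℝ) - (n:ℝ)*x),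
      SgenK k 1 n ((n:ℝ)*x) ((n:ℝ) - (n:ℝ)*x), SgenK k 0 n ((n:ℝ)*x) ((n:ℝ) - (n:ℝ)*x)]
    rw [show (n:ℝ)*x + ((n:ℝ) - (n:ℝ)*x) + ((3:ℕ):ℝ)*k = (n:ℝ) + 3*k by push_cast; ring]
    rw [show (n:ℝ)*x + ((n:ℝ) - (n:ℝ)*x) + ((2:ℕ):ℝ)*k = (n:ℝ) + 2*k by push_cast; ring]
    rw [show (n:ℝ)*x + ((n:ℝ) - (n:ℝ)*x) + ((1:ℕ):ℝ)*k = (n:ℝ) + k by push_cast; ring]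
    rw [show (n:ℝ)*x + ((n:ℝ) - (n:ℝ)*x) + ((0:ℕ):ℝ)*k = (n:ℝ) by push_cast; ring]
    simp only [Nat.sub_zero]
    have e0 : pochK ((n:ℝ)) k n
        = (n:ℝ)*((n:ℝ)+k)*((n:ℝ)+2*k) * pochK ((n:ℝ)+3*k) k (n-3) := by
      have h := pochK_add ((n:ℝ)) k 3 (n-3)
      rw [show 3 + (n-3) = n by omega] at h
      rw [h, pochK_three, show (n:ℝ) + ((3:ℕ):ℝ)*k = (n:ℝ) + 3*k by push_cast; ring]
    have e1 : pochK ((n:ℝ)+k) k (n-1)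
        = ((n:ℝ)+k)*((n:ℝ)+2*k) * pochK ((n:ℝ)+3*k) k (n-3) := by
      have h := pochK_add ((n:ℝ)+k) k 2 (n-3)
      rw [show 2 + (n-3) = n-1 by omega] at h
      rw [h, pochK_two, show (n:ℝ) + k + ((2:ℕ):ℝ)*k = (n:ℝ) + 3*k by push_cast; ring]
      ring
    have e2 : pochK ((n:ℝ)+2*k) k (n-2)
        = ((n:ℝ)+2*k) * pochK ((n:ℝ)+3*k) k (n-3) := by
      have h := pochK_add ((n:ℝ)+2*k) k 1 (n-3)
      rw [show 1 + (n-3) = n-2 by omega] at h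
      rw [h, pochK_one, show (n:ℝ) + 2*k + ((1:ℕ):ℝ)*k = (n:ℝ) + 3*k by push_cast; ring]
    rw [e0, e1, e2]
    rw [pochK_three, pochK_two, pochK_one, pochK_zero']
    simp only [Finset.prod_range_succ, Finset.prod_range_zero, Finset.prod_range_one]
    generalize pochK ((n:ℝ) + 3*k) k (n-3) = P at hQ ⊢
    push_cast
    field_simp [hQ.ne']
    ring
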